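/- arXiv:math/0302024 — 2 statements merged into one kernel-verified Lean document; each statement's English description precedes it below -/
import Mathlib

section
/- Let φ be a nonzero spinor at a point p of a Lorentzian spin manifold and V_φ its Dirac current defined by g(V_φ, X) = −⟨X·φ, φ⟩. Then V_φ(p) ≠ 0 and V_φ(p) is causal, i.e. g_p(V_φ, V_φ) ≤ 0. -/
/-- On a time-oriented Lorentzian spin manifold, the Dirac
current `Vφ` of a spinor `φ ≠ 0` at a point, defined by
`g(Vφ, X) = −⟨X·φ, φ⟩`, is nonzero and causal: `g(Vφ, Vφ) ≤ 0`.
Pointwise model: `V` is the tangent space with Lorentzian metric `g`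
(orthonormal frame `e` of signs `ε`, one timelike direction `e 0`),
`c` is Clifford multiplication, `inn` the indefinite invariant spinor inner
product with `⟨X·φ,ψ⟩ = ⟨φ,X·ψ⟩`; the time orientation makes
`ψ ↦ ⟨e₀·ψ,ψ⟩` positive definite (`hpos`). -/
theorem dirac_current_nonzero_and_causal
    {V S : Type*} [AddCommGroup V] [Module ℝ V]
    [AddCommGroup S] [Module ℂ S]
    (n : ℕ) (hn : 3 ≤ n)
    (g : V → V → ℝ) (hg_symm : ∀ x y, g x y = g y x)
    (e : Fin n → V) (ε : Fin n → ℝ)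
    (hε : ∀ i : Fin n, ε i = if (i : ℕ) = 0 then -1 else 1)
    (hframe : ∀ i j, g (e i) (e j) = if i = j then ε i else 0)
    (hbasis : ∀ x : V, (∀ i, g x (e i) = 0) → x = 0)
    (c : V → S → S)
    (hc_add : ∀ (x y : V) (ψ : S), c (x + y) ψ = c x ψ + c y ψ)
    (hc_smul : ∀ (a : ℝ) (x : V) (ψ : S), c (a • x) ψ = (a : ℂ) • c x ψ)
    (hCl : ∀ (x y : V) (ψ : S), c x (c y ψ) + c y (c x ψ) = (-2 * g x y : ℂ) • ψ)
    (inn : S → S → ℂ)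
    (hherm : ∀ ψ₁ ψ₂, inn ψ₂ ψ₁ = starRingEnd ℂ (inn ψ₁ ψ₂))
    (hsym : ∀ (x : V) (ψ₁ ψ₂ : S), inn (c x ψ₁) ψ₂ = inn ψ₁ (c x ψ₂))
    (hpos : ∀ ψ : S, ψ ≠ 0 → 0 < (inn (c (e ⟨0, by omega⟩) ψ) ψ).re)
    (φ : S) (hφ : φ ≠ 0)
    (Vφ : V) (hV : ∀ X : V, (g Vφ X : ℂ) = -inn (c X φ) φ) :
    Vφ ≠ 0 ∧ g Vφ Vφ ≤ 0 := by
  have hn0 : 0 < n := by omega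
  set i0 : Fin n := ⟨0, hn0⟩ with hi0
  set e0 : V := e i0 with he0def
  -- cancellation lemmas for the complex module S
  have hsmulc : ∀ (z : ℂ) (X Y : S), z ≠ 0 → z • X = z • Y → X = Y := by
    intro z X Y hz hXY
    calc X = (z⁻¹ * z) • X := by rw [inv_mul_cancel₀ hz, one_smul]
    _ = z⁻¹ • (z • X) := by rw [mul_smul]
    _ = z⁻¹ • (z • Y) := by rw [hXY]
    _ = (z⁻¹ * z) • Y := by rw [mul_smul]
    _ = Y := by rw [inv_mul_cancel₀ hz, one_smul]
  have hcancel : ∀ (z w : ℂ) (χ : S), χ ≠ 0 → z • χ = w • χ → z = w := by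
    intro z w χ hχ hzw
    by_contra hne
    have hzwne : z - w ≠ 0 := sub_ne_zero.mpr hne
    have hsub : (z - w) • χ = 0 := by rw [sub_smul, hzw, sub_self]
    apply hχ
    calc χ = ((z - w)⁻¹ * (z - w)) • χ := by rw [inv_mul_cancel₀ hzwne, one_smul]
    _ = (z - w)⁻¹ • ((z - w) • χ) := by rw [mul_smul]
    _ = 0 := by rw [hsub, smul_zero]
  have hzero : ∀ (z : ℂ) (χ : S), χ ≠ 0 → z • χ = 0 → z = 0 := by
    intro z χ hχ hz
    exact hcancel z 0 χ hχ (by simpa using hz)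
  -- hpos with e0
  have hpos0 : ∀ ψ : S, ψ ≠ 0 → 0 < (inn (c e0 ψ) ψ).re := by
    intro ψ hψ; exact hpos ψ hψ
  -- g e0 e0 = -1
  have hg00 : g e0 e0 = -1 := by
    have h1 := hframe i0 i0
    rw [if_pos rfl, hε] at h1
    rw [← he0def] at h1
    simpa [hi0] using h1
  -- c 0 ζ = 0
  have hc0 : ∀ ζ : S, c (0 : V) ζ = 0 := by
    intro ζ
    have h := hc_smul 0 e0 ζ
    rw [zero_smul] at h
    simpa using h
  -- g x 0 = 0 and c x 0 = 0
  have hgx0 : ∀ x : V, g x 0 = 0 := by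
    intro x
    have h1 := hCl x 0 φ
    have h2 := hCl x 0 ((2:ℂ) • φ)
    simp only [hc0, add_zero] at h1 h2
    rw [h1] at h2
    rw [smul_smul] at h2
    have h3 := hcancel _ _ φ hφ h2
    have h4 : (g x 0 : ℂ) = 0 := by linear_combination (1/2) * h3
    exact_mod_cast h4
  have hcx0 : ∀ x : V, c x (0 : S) = 0 := by
    intro x
    have h1 := hCl x 0 φ
    simp only [hc0, add_zero] at h1
    rw [h1, hgx0]
    simp
  -- c e0 (c e0 ζ) = ζ
  have hee : ∀ ζ : S, c e0 (c e0 ζ) = ζ := by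
    intro ζ
    have h := hCl e0 e0 ζ
    rw [hg00] at h
    apply hsmulc (2:ℂ) _ _ two_ne_zero
    rw [two_smul, h]
    congr 1
    push_cast
    ring
  have hθne : c e0 φ ≠ 0 := by
    intro h
    apply hφ
    have h2 := hee φ
    rw [h, hcx0] at h2
    exact h2.symm
  -- the scaling function f
  set f : ℝ → ℝ := fun r => -2 * g e0 (r • e0) - r with hfdef
  have hf : ∀ (r : ℝ) (ζ : S), c e0 ((r : ℂ) • ζ) = ((f r : ℝ) : ℂ) • c e0 ζ := by
    intro r ζ
    have h1 : (r : ℂ) • ζ = c (r • e0) (c e0 ζ) := by rw [hc_smul, hee]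
    rw [h1]
    have h2 := hCl e0 (r • e0) (c e0 ζ)
    rw [hee ζ, hc_smul r e0 ζ] at h2
    have h3 : c e0 (c (r • e0) (c e0 ζ))
        = (-2 * (g e0 (r • e0) : ℂ)) • c e0 ζ - (r : ℂ) • c e0 ζ :=
      eq_sub_of_add_eq h2
    rw [h3, ← sub_smul]
    congr 1
    simp only [hfdef]
    push_cast
    ring
  have hf0 : f 0 = 0 := by
    have h := hf 0 φ
    simp only [Complex.ofReal_zero, zero_smul, hcx0] at h
    have h2 := hzero _ _ hθne h.symm
    exact_mod_cast h2
  have hf1 : f 1 = 1 := by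
    have h := hf 1 φ
    simp only [Complex.ofReal_one, one_smul] at h
    have h2 := hcancel 1 ((f 1 : ℝ) : ℂ) (c e0 φ) hθne (by rw [one_smul]; exact h)
    exact_mod_cast h2.symm
  have hff : ∀ r : ℝ, f (f r) = r := by
    intro r
    have h1 := hf r φ
    have h2 := congrArg (c e0) h1
    rw [hee, hf (f r) (c e0 φ), hee] at h2
    have h3 := hcancel _ _ φ hφ h2
    exact_mod_cast h3.symm
  have hfmul : ∀ r t : ℝ, f (r * t) = f r * f t := by
    intro r t
    have h1 : ((r * t : ℝ) : ℂ) • φ = (r : ℂ) • ((t : ℂ) • φ) := by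
      rw [smul_smul]; push_cast; ring_nf
    have h2 := hf (r * t) φ
    rw [h1, hf r ((t : ℂ) • φ), hf t φ, smul_smul] at h2
    have h3 := hcancel _ _ (c e0 φ) hθne h2
    have h4 : ((f r : ℝ) : ℂ) * ((f t : ℝ) : ℂ) = ((f (r * t) : ℝ) : ℂ) := h3
    exact_mod_cast h4.symm
  have hfne : ∀ r : ℝ, r ≠ 0 → f r ≠ 0 := by
    intro r hr hfr
    apply hr
    rw [← hff r, hfr, hf0]
  have hfposs : ∀ r : ℝ, 0 < r → 0 < f r := by
    intro r hr
    have h1 : f r = f (Real.sqrt r) * f (Real.sqrt r) := by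
      rw [← hfmul, Real.mul_self_sqrt hr.le]
    rw [h1]
    exact mul_self_pos.mpr (hfne _ (ne_of_gt (Real.sqrt_pos.mpr hr)))
  have hfm1 : f (-1) = -1 := by
    have h1 : f (-1) * f (-1) = 1 := by rw [← hfmul]; norm_num [hf1]
    rcases mul_self_eq_one_iff.mp h1 with h | h
    · exfalso
      have h2 := hff (-1)
      rw [h, hf1] at h2
      norm_num at h2
    · exact h
  have hsign : ∀ r : ℝ, r ≠ 0 → 0 < r * f r := by
    intro r hr
    rcases lt_or_gt_of_ne hr with hneg | hposr
    · have h1 : f r = -f (-r) := by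
        rw [show r = -1 * -r by ring, hfmul, hfm1]; ring
      have h2 : 0 < f (-r) := hfposs _ (by linarith)
      nlinarith
    · nlinarith [hfposs r hposr]
  -- u := g Vφ e0 < 0
  have hVe0 := hV e0
  set u : ℝ := g Vφ e0 with hu
  have hreφ := hpos0 φ hφ
  have hun : u < 0 := by
    have h2 : inn (c e0 φ) φ = -(u : ℂ) := by linear_combination hVe0
    rw [h2] at hreφ
    simp only [Complex.neg_re, Complex.ofReal_re] at hreφ
    linarith
  -- Vφ ≠ 0
  have hVne : Vφ ≠ 0 := by
    intro h0
    have h1 := hCl 0 e0 φ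
    simp only [hc0, hcx0, add_zero, zero_add] at h1
    have h2 := hzero _ _ hφ h1.symm
    have h3 : (g 0 e0 : ℂ) = 0 := by linear_combination (-1/2) * h2
    have h4 : g (0 : V) e0 = 0 := by exact_mod_cast h3
    have h5 : u = 0 := by rw [hu, h0]; exact h4
    linarith
  refine ⟨hVne, ?_⟩
  -- G and ψ
  have hVV := hV Vφ
  set G : ℝ := g Vφ Vφ with hG
  set ψ : S := c Vφ φ with hψdef
  by_cases hψ0 : ψ = 0
  · -- null degenerate case : G = 0
    have h1 := hCl Vφ Vφ φ
    rw [← hψdef, ← hG, hψ0, hcx0] at h1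
    have h2' : ((-2 : ℂ) * (G : ℂ)) • φ = 0 := by rw [← h1]; simp
    have h2 := hzero _ _ hφ h2' 
    have h3 : (G : ℂ) = 0 := by linear_combination (-1/2) * h2
    have h4 : G = 0 := by exact_mod_cast h3
    exact le_of_eq h4
  · have hreψ := hpos0 ψ hψ0
    -- c Vφ ψ = (-G) • φ
    have h1 := hCl Vφ Vφ φ
    rw [← hψdef, ← hG] at h1
    have hVψ : c Vφ ψ = ((-G : ℝ) : ℂ) • φ := by
      apply hsmulc (2:ℂ) _ _ two_ne_zero
      rw [two_smul, h1, smul_smul]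
      congr 1
      push_cast
      ring
    set a : ℝ := -2 * u with ha
    set b : ℝ := -f (-G) with hb
    set Y : V := a • Vφ + b • e0 with hY
    have hχ : c Vφ (c e0 ψ) = (a : ℂ) • ψ + (b : ℂ) • c e0 φ := by
      have h2 := hCl Vφ e0 ψ
      rw [hVψ, hf (-G) φ, ← hu] at h2
      have h3 : c Vφ (c e0 ψ)
          = (-2 * (u : ℂ)) • ψ - ((f (-G) : ℝ) : ℂ) • c e0 φ := eq_sub_of_add_eq h2
      rw [h3, ha, hb]
      push_cast
      module
    have hcY : c Y φ = (a : ℂ) • ψ + (b : ℂ) • c e0 φ := by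
      rw [hY, hc_add, hc_smul, hc_smul, ← hψdef]
    have hPeq : inn (c e0 ψ) ψ = inn (c Y φ) φ := by
      have h2 := hsym Vφ (c e0 ψ) φ
      rw [← hψdef, hχ, ← hcY] at h2
      exact h2.symm
    have hQv := hV Y
    set Q : ℝ := g Vφ Y with hQ
    have hQneg : Q < 0 := by
      have h2 : inn (c e0 ψ) ψ = -(Q : ℂ) := by rw [hPeq]; linear_combination hQv
      rw [h2] at hreψ
      simp only [Complex.neg_re, Complex.ofReal_re] at hreψ
      linarith
    -- key identity
    have hVχ : c Vφ (c Y φ) = ((-G : ℝ) : ℂ) • c e0 ψ := by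
      rw [hcY, ← hχ]
      have h2 := hCl Vφ Vφ (c e0 ψ)
      rw [← hG] at h2
      apply hsmulc (2:ℂ) _ _ two_ne_zero
      rw [two_smul, h2, smul_smul]
      congr 1
      push_cast
      ring
    have hYψ : c Y ψ = (a : ℂ) • (((-G : ℝ) : ℂ) • φ) + (b : ℂ) • c e0 ψ := by
      rw [hY, hc_add, hc_smul, hc_smul, hVψ]
    have hd := hCl Vφ Y φ
    rw [← hψdef, ← hQ] at hd
    have hkey : ((b - G : ℝ) : ℂ) • c e0 ψ = ((a * G - 2 * Q : ℝ) : ℂ) • φ := by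
      have h4 : ((b - G : ℝ) : ℂ) • c e0 ψ - ((a * G - 2 * Q : ℝ) : ℂ) • φ
          = (((-G : ℝ) : ℂ) • c e0 ψ
              + ((a : ℂ) • (((-G : ℝ) : ℂ) • φ) + (b : ℂ) • c e0 ψ))
            - (-2 * (Q : ℂ)) • φ := by
        push_cast
        module
      rw [← hVχ, ← hYψ, hd, sub_self] at h4
      exact sub_eq_zero.mp h4
    by_cases hbG : b - G = 0
    · -- nondegenerate conclusion
      have h5 : ((a * G - 2 * Q : ℝ) : ℂ) • φ = 0 := by
        rw [← hkey, hbG]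
        simp
      have h6 : a * G - 2 * Q = 0 := by
        have := hzero _ _ hφ h5
        exact_mod_cast this
      have h7 : u * G = -Q := by rw [ha] at h6; linarith
      by_contra hGpos
      push_neg at hGpos
      have h8 : u * G < 0 := mul_neg_of_neg_of_pos hun hGpos
      linarith
    · -- degenerate case: c e0 ψ is a real multiple of φ
      set m : ℝ := (a * G - 2 * Q) / (b - G) with hm
      have hbGc : ((b - G : ℝ) : ℂ) ≠ 0 := Complex.ofReal_ne_zero.mpr hbG
      have hmeq : c e0 ψ = (m : ℂ) • φ := by
        apply hsmulc _ _ _ hbGc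
        rw [hkey, smul_smul]
        congr 1
        have h5 : (b - G) * m = a * G - 2 * Q := by
          rw [hm]; field_simp
        exact_mod_cast h5.symm
      have hmne : m ≠ 0 := by
        intro hm0
        apply hψ0
        have h5 : c e0 ψ = 0 := by rw [hmeq, hm0]; simp
        rw [← hee ψ, h5, hcx0 e0]
      set s : ℝ := f m with hs
      have hsψ : ψ = c (s • e0) φ := by
        rw [hc_smul]
        have h5 := (hee ψ).symm
        rw [hmeq, hf m φ] at h5
        rw [← hs] at h5
        exact h5
      have hGs : g Vφ (s • e0) = G := by
        have h5 := hV (s • e0)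
        rw [← hsψ] at h5
        have h6 : ((g Vφ (s • e0) : ℝ) : ℂ) = (G : ℂ) := by
          rw [h5]; exact hVV.symm
        exact_mod_cast h6
      have h6 := hCl Vφ (s • e0) φ
      rw [hGs, ← hψdef, ← hsψ, hVψ, hc_smul, hmeq] at h6
      have h7 : ((-G + s * m : ℝ) : ℂ) • φ = (-2 * (G : ℂ)) • φ := by
        rw [← h6]
        push_cast
        module
      have h8 : (-G + s * m : ℝ) = -2 * G := by
        have := hcancel _ _ φ hφ h7
        exact_mod_cast this
      have h9 : 0 < m * s := by rw [hs]; exact hsign m hmne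
      nlinarith
end

section
/- Let ω = l^♭ ∧ t^♭ on ℝ^{2,n−2}, where l is lightlike, t is timelike with ⟨t,t⟩ = −1, and ⟨l,t⟩ = 0. Then the corresponding skew-adjoint operator b satisfies b³ = 0 but b² ≠ 0. -/
/-! `b` is the rank-two operator `x ↦ ⟨l,x⟩ t − ⟨t,x⟩ l`, written without bilinearity as
`⟨b x, y⟩ = ⟨l,x⟩⟨t,y⟩ − ⟨l,y⟩⟨t,x⟩`. Since `l ⊥ b V` and `⟨t, b x⟩ = −⟨l,x⟩`, one gets
`⟨b² x, y⟩ = ⟨l,x⟩⟨l,y⟩`, i.e. `b² x = ⟨l,x⟩ l`. Both `⟨l, b² x⟩` and `⟨t, b² x⟩ = −⟨l, b x⟩` vanish,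
so `b³ = 0`; and `b² ≠ 0` because `⟨b² y, y⟩ = ⟨l,y⟩²` is nonzero for some `y`
by nondegeneracy. -/

section SkewOperator

variable {R V : Type*} [CommRing R] {g : V → V → R} {l t : V} {b : V → V}

theorem form_lightlike_op_eq_zero (hg_symm : ∀ x y, g x y = g y x) (hl : g l l = 0)
    (hlt : g l t = 0) (hb : ∀ x y, g (b x) y = g l x * g t y - g l y * g t x) (x : V) :
    g l (b x) = 0 := by
  rw [hg_symm, hb, hg_symm t, hlt, hl]
  ring

theorem form_timelike_op_eq_neg (hg_symm : ∀ x y, g x y = g y x) (ht : g t t = -1)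
    (hlt : g l t = 0) (hb : ∀ x y, g (b x) y = g l x * g t y - g l y * g t x) (x : V) :
    g t (b x) = -g l x := by
  rw [hg_symm, hb, ht, hlt]
  ring

theorem form_op_op_eq_mul (hg_symm : ∀ x y, g x y = g y x) (hl : g l l = 0)
    (ht : g t t = -1) (hlt : g l t = 0)
    (hb : ∀ x y, g (b x) y = g l x * g t y - g l y * g t x) (x y : V) :
    g (b (b x)) y = g l x * g l y := by
  rw [hb, form_lightlike_op_eq_zero hg_symm hl hlt hb,
    form_timelike_op_eq_neg hg_symm ht hlt hb]
  ring

theorem op_op_op_eq_zero [Zero V] (hg_symm : ∀ x y, g x y = g y x)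
    (hg_nondeg : ∀ x : V, (∀ y, g x y = 0) → x = 0) (hl : g l l = 0)
    (ht : g t t = -1) (hlt : g l t = 0)
    (hb : ∀ x y, g (b x) y = g l x * g t y - g l y * g t x) (x : V) :
    b (b (b x)) = 0 := by
  refine hg_nondeg _ fun y => ?_
  rw [hb, form_lightlike_op_eq_zero hg_symm hl hlt hb, form_timelike_op_eq_neg hg_symm ht hlt hb,
    form_lightlike_op_eq_zero hg_symm hl hlt hb]
  ring

theorem exists_op_op_ne_zero [NoZeroDivisors R] [Zero V] (hg_symm : ∀ x y, g x y = g y x)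
    (hg_nondeg : ∀ x : V, (∀ y, g x y = 0) → x = 0) (hl : g l l = 0) (hlne : l ≠ 0)
    (ht : g t t = -1) (hlt : g l t = 0)
    (hb : ∀ x y, g (b x) y = g l x * g t y - g l y * g t x) :
    ∃ x, b (b x) ≠ 0 := by
  by_contra! hb2
  refine hlne (hg_nondeg l fun y => ?_)
  -- `g` is not assumed bilinear: `⟨0, y⟩ = 0` comes from `0 = b² t` and `⟨l,t⟩ = 0`.
  have hsq : g l y * g l y = 0 := by
    rw [← form_op_op_eq_mul hg_symm hl ht hlt hb, hb2 y, ← hb2 t,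
      form_op_op_eq_mul hg_symm hl ht hlt hb, hlt, zero_mul]
  exact mul_self_eq_zero.mp hsq

end SkewOperator

theorem type_Ib_operator_cube_zero_square_nonzero_general
    {V : Type*} [AddCommGroup V] [Module ℝ V]
    (g : V → V → ℝ) (hg_symm : ∀ x y, g x y = g y x)
    (hg_nondeg : ∀ x : V, (∀ y, g x y = 0) → x = 0)
    (l t : V)
    (hl : g l l = 0) (hlne : l ≠ 0)
    (ht : g t t = -1) (hlt : g l t = 0)
    (b : V →ₗ[ℝ] V)
    (hb : ∀ x y, g (b x) y = g l x * g t y - g l y * g t x) :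
    (∀ x, b (b (b x)) = 0) ∧ (∃ x, b (b x) ≠ 0) :=
  ⟨op_op_op_eq_zero hg_symm hg_nondeg hl ht hlt hb,
    exists_op_op_ne_zero hg_symm hg_nondeg hl hlne ht hlt hb⟩

/-- Let ω = l♭ ∧ t♭ on ℝ^{2,n−2}, where l is lightlike, t is
timelike with g(t,t) = −1 and g(l,t) = 0, and let `b` be the corresponding
skew-adjoint operator, `g(b(x),y) = ω(x,y) = g(l,x)g(t,y) − g(l,y)g(t,x)`.
Then b³ = 0 but b² ≠ 0.  Model: `V` is an n-dimensional real vector space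
with a symmetric nondegenerate bilinear form `g` of signature (2,n−2). -/
theorem type_Ib_operator_cube_zero_square_nonzero
    {V : Type*} [AddCommGroup V] [Module ℝ V] [FiniteDimensional ℝ V]
    (n : ℕ) (hn : 3 ≤ n)
    (g : V → V → ℝ) (hg_symm : ∀ x y, g x y = g y x)
    (hg_nondeg : ∀ x : V, (∀ y, g x y = 0) → x = 0)
    -- signature (2, n−2)
    (bas : Module.Basis (Fin n) ℝ V)
    (hsig : ∀ i j, g (bas i) (bas j) =
      if i = j then (if (i : ℕ) < 2 then -1 else 1) else 0)
    (l t : V)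
    (hl : g l l = 0) (hlne : l ≠ 0)
    (ht : g t t = -1) (hlt : g l t = 0)
    (b : V →ₗ[ℝ] V)
    (hb : ∀ x y, g (b x) y = g l x * g t y - g l y * g t x) :
    (∀ x, b (b (b x)) = 0) ∧ (∃ x, b (b x) ≠ 0) :=
  type_Ib_operator_cube_zero_square_nonzero_general g hg_symm hg_nondeg l t hl hlne ht hlt b hb
end
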